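/- Let H be the class of functions on ℝ^h of the form x ↦ C·max{0, w ⊙ x} interpreted as x ↦ C·σ(diag(w)x) with σ(z) = max_j z_j, where C = ∏_{j=2}^d M_p(j) and w ∈ ℝ^h satisfies ‖w‖_p ≤ M_p(1). With data points x_i = B·e_{(i mod h)} (scaled standard basis vectors) and loss ℓ(z) = z/γ, the empirical Rademacher complexity satisfies R̂_m(ℓ∘H) ≥ Ω(B ∏_{j=1}^d M_p(j) · h^{1/2 − 1/p} / (γ√m)). -/

import Mathlib

/-!
Fix a sign pattern `ε` and let `S_k = Σ_{i ∈ A_k} ε_i` be the sign sum over the residue class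
`A_k = {i : i ≡ k mod h}`. The supremum over the class is at least the value of the single network
with `w_k = M_p(1) h^{-1/p}` if `S_k ≥ 0` and `w_k = 0` otherwise; since `x_i = B e_{i mod h}` and
`w ≥ 0`, that value is proportional to `Σ_k max(S_k, 0)`. As `E S_k = 0`,
`E max(S_k, 0) = E|S_k| / 2`, and Hölder's inequality `(E S²)³ ≤ (E|S|)² E S⁴` together with
`E S² = n`, `E S⁴ ≤ 3n²` gives `E|S_k| ≥ √(|A_k| / 3)`, where `|A_k| ≥ ⌊m/h⌋ ≥ m/(2h)`.
-/

/-- A Rademacher sign from a boolean. -/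
def sgn (b : Bool) : ℝ := if b then 1 else -1

/-- Expectation over `ε` uniform on `{-1,+1}^m` (encoded as `Fin m → Bool`). -/
noncomputable def EB (m : ℕ) (f : (Fin m → Bool) → ℝ) : ℝ := (∑ ε, f ε) / 2 ^ m

/-- Empirical Rademacher complexity of a class `H` on data `x₁,…,x_m`. -/
noncomputable def rademacher {α : Type*} (m : ℕ) (x : Fin m → α) (H : Set (α → ℝ)) : ℝ :=
  EB m (fun ε => sSup ((fun h => (1 / (m:ℝ)) * ∑ i, sgn (ε i) * h (x i)) '' H))

open Finset

lemma sgn_not (b : Bool) : sgn (!b) = -sgn b := by cases b <;> simp [sgn]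

lemma sgn_sq (b : Bool) : sgn b ^ 2 = 1 := by cases b <;> simp [sgn]

lemma abs_sgn (b : Bool) : |sgn b| = 1 := by cases b <;> simp [sgn]

lemma sum_eq_zero_of_perm_eq_neg {α : Type*} [Fintype α] (σ : Equiv.Perm α) {f : α → ℝ}
    (hf : ∀ x, f (σ x) = -f x) : ∑ x, f x = 0 := by
  have h := Fintype.sum_equiv σ (fun x => f (σ x)) f fun _ => rfl
  simp only [hf, sum_neg_distrib] at h
  linarith

/-- Follows from the two Cauchy–Schwarz inequalities `(Σ f²)² ≤ Σ |f| · Σ |f|³` and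
`(Σ |f|³)² ≤ Σ f² · Σ f⁴`. -/
lemma sum_sq_pow_three_le_sq_sum_abs_mul_sum_pow_four {ι : Type*} (s : Finset ι) (f : ι → ℝ) :
    (∑ i ∈ s, f i ^ 2) ^ 3 ≤ (∑ i ∈ s, |f i|) ^ 2 * ∑ i ∈ s, f i ^ 4 := by
  set X := ∑ i ∈ s, f i ^ 2
  have hX : 0 ≤ X := sum_nonneg fun i _ => sq_nonneg _
  have hcs₁ : X ^ 2 ≤ (∑ i ∈ s, |f i|) * ∑ i ∈ s, |f i| ^ 3 :=
    sum_sq_le_sum_mul_sum_of_sq_le_mul s (fun _ _ => abs_nonneg _) (fun _ _ => by positivity)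
      fun i _ => le_of_eq (by rw [← sq_abs (f i)]; ring)
  have hcs₂ : (∑ i ∈ s, |f i| ^ 3) ^ 2 ≤ X * ∑ i ∈ s, f i ^ 4 :=
    sum_sq_le_sum_mul_sum_of_sq_le_mul s (fun _ _ => sq_nonneg _) (fun _ _ => by positivity)
      fun i _ => le_of_eq (by ring_nf; exact (by decide : Even 6).pow_abs _)
  rcases hX.eq_or_lt with hX0 | hXpos
  · rw [← hX0, zero_pow three_ne_zero]; positivity
  refine le_of_mul_le_mul_left ?_ hXpos
  calc X * X ^ 3 = (X ^ 2) ^ 2 := by ring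
    _ ≤ ((∑ i ∈ s, |f i|) * ∑ i ∈ s, |f i| ^ 3) ^ 2 := by gcongr
    _ = (∑ i ∈ s, |f i|) ^ 2 * (∑ i ∈ s, |f i| ^ 3) ^ 2 := by ring
    _ ≤ (∑ i ∈ s, |f i|) ^ 2 * (X * ∑ i ∈ s, f i ^ 4) := by gcongr
    _ = X * ((∑ i ∈ s, |f i|) ^ 2 * ∑ i ∈ s, f i ^ 4) := by ring

lemma EB_const_mul (m : ℕ) (c : ℝ) (f : (Fin m → Bool) → ℝ) :
    EB m (fun ε => c * f ε) = c * EB m f := by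
  simp only [EB, ← mul_sum, mul_div_assoc]

lemma EB_sum {ι : Type*} (s : Finset ι) (m : ℕ) (f : ι → (Fin m → Bool) → ℝ) :
    EB m (fun ε => ∑ k ∈ s, f k ε) = ∑ k ∈ s, EB m (f k) := by
  simp only [EB]
  rw [sum_comm, sum_div]

section RademacherSum

variable {m : ℕ}

noncomputable def rademacherSum (A : Finset (Fin m)) (ε : Fin m → Bool) : ℝ :=
  ∑ i ∈ A, sgn (ε i)

lemma rademacherSum_insert {A : Finset (Fin m)} {a : Fin m} (ha : a ∉ A) (ε : Fin m → Bool) :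
    rademacherSum (insert a A) ε = sgn (ε a) + rademacherSum A ε :=
  sum_insert ha

def flipAt (a : Fin m) : Equiv.Perm (Fin m → Bool) :=
  Function.Involutive.toPerm (fun ε => Function.update ε a (!ε a)) fun ε => by
    ext i
    by_cases hi : i = a
    · subst hi; simp
    · simp [hi]

lemma flipAt_apply (a : Fin m) (ε : Fin m → Bool) : flipAt a ε = Function.update ε a (!ε a) :=
  rfl

lemma sum_sgn_mul_rademacherSum_pow {A : Finset (Fin m)} {a : Fin m} (ha : a ∉ A) (j : ℕ) :
    ∑ ε : Fin m → Bool, sgn (ε a) * rademacherSum A ε ^ j = 0 := by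
  refine sum_eq_zero_of_perm_eq_neg (flipAt a) fun ε => ?_
  have hA : rademacherSum A (flipAt a ε) = rademacherSum A ε :=
    sum_congr rfl fun i hi => by
      simp [flipAt_apply, ne_of_mem_of_not_mem hi ha]
  rw [hA, flipAt_apply, Function.update_self, sgn_not, neg_mul]

lemma sum_rademacherSum (A : Finset (Fin m)) : ∑ ε : Fin m → Bool, rademacherSum A ε = 0 := by
  simp only [rademacherSum]
  rw [sum_comm]
  exact sum_eq_zero fun a _ => by
    simpa using sum_sgn_mul_rademacherSum_pow (A := ∅) (notMem_empty a) 0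

lemma sum_rademacherSum_sq (A : Finset (Fin m)) :
    ∑ ε : Fin m → Bool, rademacherSum A ε ^ 2 = 2 ^ m * #A := by
  induction A using Finset.induction_on with
  | empty => simp [rademacherSum]
  | insert a A ha ih =>
    have hexp : ∀ ε, rademacherSum (insert a A) ε ^ 2
        = 1 + 2 * (sgn (ε a) * rademacherSum A ε ^ 1) + rademacherSum A ε ^ 2 := fun ε => by
      rw [rademacherSum_insert ha]; linear_combination sgn_sq (ε a)
    simp only [hexp, sum_add_distrib, ← mul_sum, sum_sgn_mul_rademacherSum_pow ha, ih, sum_const,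
      card_univ, Fintype.card_fun, Fintype.card_bool, Fintype.card_fin, card_insert_of_notMem ha]
    push_cast
    ring

lemma sum_rademacherSum_pow_four (A : Finset (Fin m)) :
    ∑ ε : Fin m → Bool, rademacherSum A ε ^ 4 = 2 ^ m * (3 * #A ^ 2 - 2 * #A) := by
  induction A using Finset.induction_on with
  | empty => simp [rademacherSum]
  | insert a A ha ih =>
    have hexp : ∀ ε, rademacherSum (insert a A) ε ^ 4
        = 1 + 4 * (sgn (ε a) * rademacherSum A ε ^ 1) + 6 * rademacherSum A ε ^ 2
          + 4 * (sgn (ε a) * rademacherSum A ε ^ 3) + rademacherSum A ε ^ 4 := fun ε => by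
      rw [rademacherSum_insert ha]
      linear_combination (sgn (ε a) ^ 2 + 1 + 4 * rademacherSum A ε * sgn (ε a)
        + 6 * rademacherSum A ε ^ 2) * sgn_sq (ε a)
    simp only [hexp, sum_add_distrib, ← mul_sum, sum_sgn_mul_rademacherSum_pow ha,
      sum_rademacherSum_sq, ih, sum_const, card_univ, Fintype.card_fun, Fintype.card_bool,
      Fintype.card_fin, card_insert_of_notMem ha]
    push_cast
    ring

lemma sqrt_card_div_three_le_EB_abs_rademacherSum (A : Finset (Fin m)) :
    √((#A : ℝ) / 3) ≤ EB m (fun ε => |rademacherSum A ε|) := by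
  have hmoment := sum_sq_pow_three_le_sq_sum_abs_mul_sum_pow_four univ (rademacherSum A)
  rw [sum_rademacherSum_sq, sum_rademacherSum_pow_four] at hmoment
  rw [EB, Real.sqrt_le_left (by positivity), div_pow, le_div_iff₀ (by positivity)]
  rcases (#A).eq_zero_or_pos with hA | hA
  · simp only [hA, CharP.cast_eq_zero, zero_div, zero_mul]; positivity
  have hn : (1 : ℝ) ≤ #A := by exact_mod_cast hA
  set n : ℝ := (#A : ℝ)
  set Y := ∑ ε : Fin m → Bool, |rademacherSum A ε|
  refine le_of_mul_le_mul_right ?_ (by positivity : 0 < 3 * 2 ^ m * n ^ 2)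
  calc n / 3 * (2 ^ m) ^ 2 * (3 * 2 ^ m * n ^ 2) = (2 ^ m * n) ^ 3 := by ring
    _ ≤ Y ^ 2 * (2 ^ m * (3 * n ^ 2 - 2 * n)) := hmoment
    _ ≤ Y ^ 2 * (2 ^ m * (3 * n ^ 2)) := by gcongr; linarith
    _ = Y ^ 2 * (3 * 2 ^ m * n ^ 2) := by ring

lemma EB_max_rademacherSum_zero_eq_EB_abs_div_two (A : Finset (Fin m)) :
    EB m (fun ε => max (rademacherSum A ε) 0) = EB m (fun ε => |rademacherSum A ε|) / 2 := by
  have hmax : ∀ s : ℝ, max s 0 = (|s| + s) / 2 := fun s => by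
    rcases le_total s 0 with hs | hs
    · simp [hs, abs_of_nonpos hs]
    · simp [hs, abs_of_nonneg hs]
  simp only [EB, hmax, ← sum_div, sum_add_distrib, sum_rademacherSum, add_zero]
  ring

lemma sqrt_card_div_three_div_two_le_EB_max_rademacherSum (A : Finset (Fin m)) :
    √((#A : ℝ) / 3) / 2 ≤ EB m (fun ε => max (rademacherSum A ε) 0) := by
  rw [EB_max_rademacherSum_zero_eq_EB_abs_div_two]
  gcongr
  exact sqrt_card_div_three_le_EB_abs_rademacherSum A

end RademacherSum

lemma cast_div_le_two_mul_cast_nat_div {h m : ℕ} (h0 : 0 < h) (hm : h ≤ m) :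
    (m : ℝ) / h ≤ 2 * (m / h : ℕ) := by
  have hq : 1 ≤ m / h := (Nat.one_le_div_iff h0).mpr hm
  have hdiv := Nat.div_add_mod m h
  have hmod := Nat.mod_lt m h0
  have hle : m ≤ 2 * (m / h) * h := by nlinarith
  rw [div_le_iff₀ (by positivity)]
  exact_mod_cast hle

lemma nat_div_le_card_filter_ofNat_eq {h m : ℕ} [NeZero h] (k : Fin h) :
    m / h ≤ #{i : Fin m | Fin.ofNat h i = k} := by
  have hcount := Nat.count_modEq_card m (Nat.pos_of_neZero h) k
  have hcard : #{i : Fin m | Fin.ofNat h i = k} = Nat.count (· ≡ k [MOD h]) m := by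
    rw [Nat.count_eq_card_filter_range, ← card_map Fin.valEmbedding]
    congr 1
    ext n
    simp only [mem_map, mem_filter, mem_univ, true_and, Fin.valEmbedding_apply, mem_range,
      Fin.ext_iff, Fin.val_ofNat, Nat.ModEq, Nat.mod_eq_of_lt k.isLt]
    exact ⟨fun ⟨i, hi, hin⟩ => hin ▸ ⟨i.isLt, hi⟩, fun ⟨hn, hk⟩ => ⟨⟨n, hn⟩, hk, rfl⟩⟩
  omega

lemma sqrt_mul_sqrt_div_le_sum_EB_max_rademacherSum {h m : ℕ} [NeZero h] (hm : h ≤ m) :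
    √m * √h / (2 * √6) ≤
      ∑ k : Fin h, EB m (fun ε => max (rademacherSum {i : Fin m | Fin.ofNat h i = k} ε) 0) := by
  have hh : (0 : ℝ) < h := by exact_mod_cast Nat.pos_of_neZero h
  have hcard (k : Fin h) : (m : ℝ) / h / 6 ≤ (#{i : Fin m | Fin.ofNat h i = k} : ℝ) / 3 := by
    have hfloor := cast_div_le_two_mul_cast_nat_div (Nat.pos_of_neZero h) hm
    have hfiber : ((m / h : ℕ) : ℝ) ≤ #{i : Fin m | Fin.ofNat h i = k} :=
      Nat.cast_le.2 (nat_div_le_card_filter_ofNat_eq k)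
    linarith
  calc √m * √h / (2 * √6) = ∑ _k : Fin h, √((m : ℝ) / h / 6) / 2 := by
        rw [sum_const, card_univ, Fintype.card_fin, nsmul_eq_mul, Real.sqrt_div' _ (by norm_num),
          Real.sqrt_div' _ hh.le]
        field_simp
        rw [Real.sq_sqrt hh.le]
    _ ≤ _ := sum_le_sum fun k _ =>
        (div_le_div_of_nonneg_right (Real.sqrt_le_sqrt (hcard k)) zero_le_two).trans
          (sqrt_card_div_three_div_two_le_EB_max_rademacherSum _)

lemma abs_ciSup_le_of_forall_abs_le {ι : Type*} [Finite ι] [Nonempty ι] {f : ι → ℝ} {K : ℝ}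
    (hf : ∀ j, |f j| ≤ K) : |⨆ j, f j| ≤ K := by
  obtain ⟨j₀⟩ := ‹Nonempty ι›
  exact abs_le.2 ⟨(neg_le_of_abs_le (hf j₀)).trans (le_ciSup (Set.finite_range f).bddAbove j₀),
    ciSup_le fun j => (le_abs_self _).trans (hf j)⟩

lemma ciSup_mul_ite_eq {ι : Type*} [Finite ι] [DecidableEq ι] {w : ι → ℝ} (hw : ∀ j, 0 ≤ w j)
    {B : ℝ} (hB : 0 ≤ B) (k : ι) : ⨆ j, w j * (if j = k then B else 0) = w k * B := by
  have : Nonempty ι := ⟨k⟩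
  refine le_antisymm (ciSup_le fun j => ?_)
    (le_ciSup_of_le (Set.finite_range _).bddAbove k (by simp))
  split_ifs with hj
  · rw [hj]
  · rw [mul_zero]; exact mul_nonneg (hw k) hB

lemma abs_le_rpow_sum_abs_rpow {ι : Type*} [Fintype ι] {p : ℝ} (hp : 0 < p) (w : ι → ℝ) (j : ι) :
    |w j| ≤ (∑ i, |w i| ^ p) ^ (1 / p) := by
  calc |w j| = (|w j| ^ p) ^ (1 / p) := by
        rw [← Real.rpow_mul (abs_nonneg _), mul_one_div_cancel hp.ne', Real.rpow_one]
    _ ≤ _ := by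
        gcongr
        exact single_le_sum (f := fun i => |w i| ^ p) (fun i _ => by positivity) (mem_univ j)

lemma rpow_sum_abs_rpow_le_of_abs_le {ι : Type*} [Fintype ι] [Nonempty ι] {p M : ℝ} (hp : 0 < p)
    (hM : 0 ≤ M) {w : ι → ℝ} (hw : ∀ j, |w j| ≤ M / (Fintype.card ι : ℝ) ^ (1 / p)) :
    (∑ j, |w j| ^ p) ^ (1 / p) ≤ M := by
  have hn : (0 : ℝ) < Fintype.card ι := by exact_mod_cast Fintype.card_pos
  calc (∑ j, |w j| ^ p) ^ (1 / p)
      ≤ (∑ _j : ι, (M / (Fintype.card ι : ℝ) ^ (1 / p)) ^ p) ^ (1 / p) :=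
        Real.rpow_le_rpow (by positivity)
          (sum_le_sum fun j _ => Real.rpow_le_rpow (abs_nonneg _) (hw j) hp.le) (by positivity)
    _ = M := by
        rw [sum_const, card_univ, nsmul_eq_mul, Real.div_rpow hM (by positivity),
          ← Real.rpow_mul hn.le, one_div_mul_cancel hp.ne', Real.rpow_one,
          mul_div_cancel₀ _ hn.ne', ← Real.rpow_mul hM, mul_one_div_cancel hp.ne', Real.rpow_one]

lemma EB_le_rademacher {α : Type*} {m : ℕ} {x : Fin m → α} {H : Set (α → ℝ)} {K : ℝ}
    (hK : ∀ f ∈ H, ∀ i, |f (x i)| ≤ K) (f : (Fin m → Bool) → α → ℝ) (hf : ∀ ε, f ε ∈ H) :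
    EB m (fun ε => 1 / (m : ℝ) * ∑ i, sgn (ε i) * f ε (x i)) ≤ rademacher m x H := by
  have hbdd (ε : Fin m → Bool) :
      BddAbove ((fun g => 1 / (m : ℝ) * ∑ i, sgn (ε i) * g (x i)) '' H) := by
    refine ⟨1 / m * ∑ _i : Fin m, K, ?_⟩
    rintro _ ⟨g, hg, rfl⟩
    dsimp only
    gcongr with i
    calc sgn (ε i) * g (x i) ≤ |sgn (ε i) * g (x i)| := le_abs_self _
      _ ≤ K := by rw [abs_mul, abs_sgn, one_mul]; exact hK g hg i
  unfold rademacher EB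
  gcongr with ε
  exact le_csSup (hbdd ε) ⟨f ε, hf ε, rfl⟩

lemma sum_sgn_mul_comp_eq_sum_mul_rademacherSum {ι : Type*} [Fintype ι] [DecidableEq ι] {m : ℕ}
    (κ : Fin m → ι) (g : ι → ℝ) (ε : Fin m → Bool) :
    ∑ i, sgn (ε i) * g (κ i) = ∑ k, g k * rademacherSum {i | κ i = k} ε := by
  rw [← sum_fiberwise univ κ]
  refine sum_congr rfl fun k _ => ?_
  rw [rademacherSum, mul_sum]
  refine sum_congr rfl fun i hi => ?_
  rw [(mem_filter.1 hi).2, mul_comm]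

/-- `ℓ ∘ H` for the loss `ℓ(z) = z / γ`, where `C` plays the role of `∏_{j=2}^d M_p(j)` and `M`
of `M_p(1)`. -/
def diagMaxClass (ι : Type*) [Fintype ι] (p M γ C : ℝ) : Set (EuclideanSpace ℝ ι → ℝ) :=
  {f | ∃ w : ι → ℝ, (∑ j, |w j| ^ p) ^ (1 / p) ≤ M ∧ f = fun x => (1 / γ) * (C * ⨆ j, w j * x j)}

lemma le_rademacher_diagMaxClass {ι : Type*} [Fintype ι] [DecidableEq ι] [Nonempty ι] {m : ℕ}
    {p B M : ℝ} (γ C : ℝ) (hp : 0 < p) (hB : 0 ≤ B) (hM : 0 ≤ M) (κ : Fin m → ι)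
    {x : Fin m → EuclideanSpace ℝ ι} (hx : ∀ i j, x i j = if j = κ i then B else 0) :
    1 / m * (C * B / γ) * (M / (Fintype.card ι : ℝ) ^ (1 / p)) *
        ∑ k, EB m (fun ε => max (rademacherSum {i | κ i = k} ε) 0)
      ≤ rademacher m x (diagMaxClass ι p M γ C) := by
  set a := M / (Fintype.card ι : ℝ) ^ (1 / p)
  have ha : 0 ≤ a := by positivity
  set S : ι → (Fin m → Bool) → ℝ := fun k => rademacherSum {i | κ i = k}
  let w : (Fin m → Bool) → ι → ℝ := fun ε k => if 0 ≤ S k ε then a else 0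
  have hw_nonneg (ε k) : 0 ≤ w ε k := by simp only [w]; split_ifs <;> simp [ha]
  have hw_abs (ε k) : |w ε k| ≤ a := by simp only [w]; split_ifs <;> simp [abs_of_nonneg ha, ha]
  have hw_mul (ε k) : w ε k * S k ε = a * max (S k ε) 0 := by
    simp only [w]; split_ifs with hS
    · rw [max_eq_left hS]
    · rw [max_eq_right (le_of_not_ge hS), zero_mul, mul_zero]
  let f ε : EuclideanSpace ℝ ι → ℝ := fun y => (1 / γ) * (C * ⨆ j, w ε j * y j)
  have hf (ε) : f ε ∈ diagMaxClass ι p M γ C :=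
    ⟨w ε, rpow_sum_abs_rpow_le_of_abs_le hp hM (hw_abs ε), rfl⟩
  have hK : ∀ g ∈ diagMaxClass ι p M γ C, ∀ i, |g (x i)| ≤ |1 / γ| * (|C| * (M * B)) := by
    rintro _ ⟨v, hv, rfl⟩ i
    rw [abs_mul, abs_mul]
    gcongr
    refine abs_ciSup_le_of_forall_abs_le fun j => ?_
    rw [abs_mul, hx]
    gcongr
    · exact (abs_le_rpow_sum_abs_rpow hp v j).trans hv
    · split_ifs <;> simp [abs_of_nonneg hB, hB]
  have hvalue (ε) : 1 / (m : ℝ) * ∑ i, sgn (ε i) * f ε (x i)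
      = 1 / m * (C * B / γ) * a * ∑ k, max (S k ε) 0 := by
    have hsup (i) : ⨆ j, w ε j * x i j = w ε (κ i) * B := by
      simp_rw [hx]; exact ciSup_mul_ite_eq (hw_nonneg ε) hB _
    calc 1 / (m : ℝ) * ∑ i, sgn (ε i) * f ε (x i)
        = 1 / m * (C * B / γ) * ∑ i, sgn (ε i) * w ε (κ i) := by
          simp only [f, hsup, mul_sum]
          exact sum_congr rfl fun i _ => by ring
      _ = 1 / m * (C * B / γ) * a * ∑ k, max (S k ε) 0 := by
          rw [sum_sgn_mul_comp_eq_sum_mul_rademacherSum]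
          change 1 / (m : ℝ) * (C * B / γ) * ∑ k, w ε k * S k ε = _
          simp only [hw_mul, ← mul_sum]
          ring
  calc _ = EB m (fun ε => 1 / m * (C * B / γ) * a * ∑ k, max (S k ε) 0) := by
        rw [EB_const_mul, EB_sum]
    _ = EB m (fun ε => 1 / (m : ℝ) * ∑ i, sgn (ε i) * f ε (x i)) := by simp only [hvalue]
    _ ≤ _ := EB_le_rademacher hK f hf

/-- lower bound via the class `x ↦ ∏_{j=2}^d M_p(j) · σ(diag(w)x)` with
`σ(z) = max_j z_j`, `‖w‖_p ≤ M_p(1)`, loss `ℓ(z) = z/γ`, and data `x_i = B·e_{i mod h}`: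
the Rademacher complexity is `Ω(B·∏_j M_p(j)·h^{1/2−1/p}/(γ√m))`. -/
theorem rad_lower_bound_schatten :
    ∃ c : ℝ, 0 < c ∧
      ∀ (h d m : ℕ) (p : ℝ), 0 < h → 1 ≤ d → h ≤ m → 1 ≤ p →
      ∀ (B γ : ℝ) (Mp : ℕ → ℝ), 0 < B → 0 < γ → (∀ j, 0 < Mp j) →
      rademacher m
          (fun i : Fin m =>
            (WithLp.toLp 2 (fun j : Fin h => if (j : ℕ) = (i : ℕ) % h then B else 0) :
              EuclideanSpace ℝ (Fin h)))
          {f | ∃ w : Fin h → ℝ, (∑ j, |w j| ^ p) ^ (1 / p) ≤ Mp 0 ∧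
              f = fun x => (1 / γ) *
                ((∏ j ∈ Finset.Ico 1 d, Mp j) * ⨆ j : Fin h, w j * x j)} ≥
        c * B * (∏ j ∈ Finset.range d, Mp j) * (h : ℝ) ^ ((1 : ℝ) / 2 - 1 / p) /
          (γ * Real.sqrt m) := by
  refine ⟨1 / (2 * √6), by positivity, ?_⟩
  intro h d m p h0 hd hm hp B γ Mp hB hγ hMp
  have : NeZero h := ⟨h0.ne'⟩
  have hm0 : (0 : ℝ) < m := by exact_mod_cast h0.trans_le hm
  have hC : 0 < ∏ j ∈ Ico 1 d, Mp j := prod_pos fun j _ => hMp j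
  have hclass := le_rademacher_diagMaxClass (p := p) γ (∏ j ∈ Ico 1 d, Mp j)
    (by linarith) hB.le (hMp 0).le (fun i : Fin m => Fin.ofNat h i)
    (x := fun i => WithLp.toLp 2 fun j : Fin h => if (j : ℕ) = (i : ℕ) % h then B else 0)
    fun i j => by simp [Fin.ext_iff]
  refine le_trans ?_ hclass
  rw [prod_range_eq_mul_Ico _ hd, Fintype.card_fin, Real.rpow_sub (by positivity),
    ← Real.sqrt_eq_rpow]
  calc 1 / (2 * √6) * B * (Mp 0 * ∏ j ∈ Ico 1 d, Mp j) * (√h / h ^ (1 / p)) / (γ * √m)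
      = 1 / m * ((∏ j ∈ Ico 1 d, Mp j) * B / γ) * (Mp 0 / h ^ (1 / p)) *
          (√m * √h / (2 * √6)) := by
        field_simp
        rw [Real.sq_sqrt hm0.le]
    _ ≤ _ := by
        have hM0 := hMp 0
        gcongr
        exact sqrt_mul_sqrt_div_le_sum_EB_max_rademacherSum hm
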